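/- Fix positive integers P and M and strictly positive weights η_i(j) > 0 for i ∈ {1,…,P}, j ∈ {−1,0,…,M}. The target distribution π(γ) ∝ 1_Γ(γ) ∏_{i=1}^P η_i(γ_i) is the unique stationary distribution of the Gibbs sampler on Γ: for every γ' ∈ Γ, ∑_{γ∈Γ} π(γ'|γ) π(γ) = π(γ'), where π(γ'|γ) = ∏_{n=1}^P π_n(γ'_n | γ'_{1:n−1}, γ_{n+1:P}) is the Gibbs transition kernel whose nth conditional is proportional to η_n(j) ∏_{i∈n̄} (1 − 1_{{1,…,M}}(j) δ_j[γ_i]). -/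

import Mathlib

open Finset

/-- `1_{{1,…,M}}(j)`: the indicator (as a real number) that `1 ≤ j ≤ M`. -/
def ind1M (M : ℕ) (j : ℤ) : ℝ := if 1 ≤ j ∧ j ≤ (M : ℤ) then 1 else 0

/-- `δ_a[b]`: the Kronecker delta (as a real number). -/
def kdelta (a b : ℤ) : ℝ := if a = b then 1 else 0

/-- `γ` is positive 1-1: no distinct indices `i, i'` with `γ i = γ i' > 0`. -/
def PosOneOne {P : ℕ} (γ : Fin P → ℤ) : Prop :=
  ∀ i i' : Fin P, i ≠ i' → ¬(γ i = γ i' ∧ 0 < γ i)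

/-- Unnormalized weight of the `n`th Gibbs conditional given the other
coordinates `c`: `η_n(j) ∏_{i∈n̄} (1 − 1_{{1,…,M}}(j) δ_j[c_i])`. -/
def wcond {P : ℕ} (M : ℕ) (η : Fin P → ℤ → ℝ) (c : Fin P → ℤ) (n : Fin P) (j : ℤ) : ℝ :=
  η n j * ∏ i ∈ ({n}ᶜ : Finset (Fin P)), (1 - ind1M M j * kdelta j (c i))

/-- Normalizing constant `K_n` of the `n`th Gibbs conditional. -/
noncomputable def Knorm {P : ℕ} (M : ℕ) (η : Fin P → ℤ → ℝ) (c : Fin P → ℤ) (n : Fin P) : ℝ :=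
  ∑ j ∈ Finset.Icc (-1 : ℤ) (M : ℤ), wcond M η c n j

/-- The mixed conditioning vector for the `n`th sub-iteration of the Gibbs
sampler: coordinates `i < n` come from the already-updated state `γ'`, the
remaining ones from the old state `γ`. -/
def mix {P : ℕ} (γ' γ : Fin P → ℤ) (n : Fin P) : Fin P → ℤ :=
  fun i => if i < n then γ' i else γ i

/-- The Gibbs transition kernel
`π(γ'|γ) = ∏_{n=1}^P π_n(γ'_n | γ'_{1:n−1}, γ_{n+1:P})`. -/
noncomputable def gibbs {P : ℕ} (M : ℕ) (η : Fin P → ℤ → ℝ) (γ' γ : Fin P → ℤ) : ℝ :=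
  ∏ n : Fin P, wcond M η (mix γ' γ n) n (γ' n) / Knorm M η (mix γ' γ n) n


/-- The finite state space `Γ` of positive 1-1 vectors in `{−1,…,M}^P`. -/
noncomputable def GammaF (P M : ℕ) : Finset (Fin P → ℤ) :=
  (Fintype.piFinset fun _ : Fin P => Finset.Icc (-1 : ℤ) (M : ℤ)).filter
    (fun γ => ∀ i i' : Fin P, i ≠ i' → ¬(γ i = γ i' ∧ 0 < γ i))

/-- The target distribution `π(γ) ∝ 1_Γ(γ) ∏_{i=1}^P η_i(γ_i)`. -/
noncomputable def targetDist (P M : ℕ) (η : Fin P → ℤ → ℝ) (γ : Fin P → ℤ) : ℝ :=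
  (if γ ∈ GammaF P M then ∏ i, η i (γ i) else 0) /
    ∑ ζ ∈ GammaF P M, ∏ i, η i (ζ i)

lemma sum_pi_split {ι : Type*} [Fintype ι] [DecidableEq ι]
    (t : ι → Finset ℤ) (m : ι) (g : (ι → ℤ) → ℝ) :
    ∑ γ ∈ Fintype.piFinset t, g γ
      = ∑ γ ∈ Fintype.piFinset (Function.update t m {0}),
          ∑ j ∈ t m, g (Function.update γ m j) := by
  rw [← Finset.sum_product']
  refine Finset.sum_nbij' (i := fun γ => (Function.update γ m 0, γ m))
    (j := fun p => Function.update p.1 m p.2) ?_ ?_ ?_ ?_ ?_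
  · intro γ hγ
    simp only [Fintype.mem_piFinset] at hγ
    simp only [Finset.mem_product, Fintype.mem_piFinset]
    refine ⟨fun i => ?_, hγ m⟩
    by_cases hi : i = m
    · subst hi; simp [Function.update_self]
    · simp [Function.update_of_ne hi, hγ i]
  · intro p hp
    simp only [Finset.mem_product, Fintype.mem_piFinset] at hp
    simp only [Fintype.mem_piFinset]
    intro i
    by_cases hi : i = m
    · subst hi; simpa using hp.2
    · simp only [Function.update_of_ne hi]
      have := hp.1 i
      simpa [Function.update_of_ne hi] using this
  · intro γ hγ
    funext i
    by_cases hi : i = m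
    · subst hi; simp
    · simp [Function.update_of_ne hi]
  · intro p hp
    simp only [Finset.mem_product, Fintype.mem_piFinset] at hp
    have h0 : p.1 m = 0 := by have := hp.1 m; simpa using this
    ext i
    · by_cases hi : i = m
      · subst hi; simp [h0]
      · simp [Function.update_of_ne hi]
    · simp
  · intro γ hγ
    congr 1
    funext i
    by_cases hi : i = m
    · subst hi; simp
    · simp [Function.update_of_ne hi]

lemma prod_indic {P : ℕ} (M : ℕ) (c : Fin P → ℤ) (n : Fin P) (j : ℤ) :
    ∏ i ∈ ({n}ᶜ : Finset (Fin P)), (1 - ind1M M j * kdelta j (c i))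
      = if ∀ i, i ≠ n → ¬(j = c i ∧ 1 ≤ j ∧ j ≤ (M : ℤ)) then 1 else 0 := by
  have hfac : ∀ i : Fin P, (1 - ind1M M j * kdelta j (c i))
      = if j = c i ∧ 1 ≤ j ∧ j ≤ (M : ℤ) then 0 else 1 := by
    intro i
    unfold ind1M kdelta
    by_cases h2 : j = c i
    · subst h2
      by_cases h1 : 1 ≤ c i ∧ c i ≤ (M : ℤ) <;> simp [h1]
    · simp [h2]
  split
  · rename_i h
    apply Finset.prod_eq_one
    intro i hi
    rw [Finset.mem_compl, Finset.mem_singleton] at hi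
    rw [hfac i, if_neg (h i hi)]
  · rename_i h
    push_neg at h
    obtain ⟨i, hin, hc⟩ := h
    apply Finset.prod_eq_zero (i := i)
    · rw [Finset.mem_compl, Finset.mem_singleton]; exact hin
    · rw [hfac i, if_pos hc]

section helpers

variable {P : ℕ} {M : ℕ} {η : Fin P → ℤ → ℝ}

lemma wcond_congr {c₁ c₂ : Fin P → ℤ} {n : Fin P} (h : ∀ i, i ≠ n → c₁ i = c₂ i) (j : ℤ) :
    wcond M η c₁ n j = wcond M η c₂ n j := by
  unfold wcond
  congr 1
  refine Finset.prod_congr rfl fun i hi => ?_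
  rw [Finset.mem_compl, Finset.mem_singleton] at hi
  rw [h i hi]

lemma Knorm_congr {c₁ c₂ : Fin P → ℤ} {n : Fin P} (h : ∀ i, i ≠ n → c₁ i = c₂ i) :
    Knorm M η c₁ n = Knorm M η c₂ n := by
  unfold Knorm
  exact Finset.sum_congr rfl fun j _ => wcond_congr h j

lemma wcond_nonneg (hη : ∀ i : Fin P, ∀ j ∈ Finset.Icc (-1 : ℤ) (M : ℤ), 0 < η i j)
    (c : Fin P → ℤ) (n : Fin P) {j : ℤ} (hj : j ∈ Finset.Icc (-1 : ℤ) (M : ℤ)) :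
    0 ≤ wcond M η c n j := by
  unfold wcond
  rw [prod_indic]
  have := (hη n j hj).le
  split <;> simp [this]

lemma Knorm_pos (hη : ∀ i : Fin P, ∀ j ∈ Finset.Icc (-1 : ℤ) (M : ℤ), 0 < η i j)
    (c : Fin P → ℤ) (n : Fin P) : 0 < Knorm M η c n := by
  have h0 : (0 : ℤ) ∈ Finset.Icc (-1 : ℤ) (M : ℤ) := by
    simp [Finset.mem_Icc]
  refine Finset.sum_pos' (fun j hj => wcond_nonneg hη c n hj) ⟨0, h0, ?_⟩
  unfold wcond
  have : ind1M M 0 = 0 := by unfold ind1M; norm_num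
  rw [this]
  simpa using hη n 0 h0

noncomputable def pit (P M : ℕ) (η : Fin P → ℤ → ℝ) (γ : Fin P → ℤ) : ℝ :=
  if γ ∈ GammaF P M then ∏ i, η i (γ i) else 0

def Rok {P : ℕ} (c : Fin P → ℤ) (m : Fin P) : Prop :=
  ∀ i i' : Fin P, i ≠ i' → i ≠ m → i' ≠ m → ¬(c i = c i' ∧ 0 < c i)

instance {c : Fin P → ℤ} {m : Fin P} : Decidable (Rok c m) := by
  unfold Rok; infer_instance

noncomputable def Bc (M : ℕ) (η : Fin P → ℤ → ℝ) (c : Fin P → ℤ) (m : Fin P) : ℝ :=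
  if Rok c m then ∏ i ∈ ({m}ᶜ : Finset (Fin P)), η i (c i) else 0

lemma pit_update (hc : ∀ i, c i ∈ Finset.Icc (-1 : ℤ) (M : ℤ)) (m : Fin P)
    {j : ℤ} (hj : j ∈ Finset.Icc (-1 : ℤ) (M : ℤ)) :
    pit P M η (Function.update c m j) = Bc M η c m * wcond M η c m j := by
  classical
  rw [Finset.mem_Icc] at hj
  unfold pit Bc wcond
  rw [prod_indic]
  have hmem : Function.update c m j ∈ Fintype.piFinset fun _ : Fin P => Finset.Icc (-1 : ℤ) (M : ℤ) := by
    rw [Fintype.mem_piFinset]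
    intro i
    by_cases hi : i = m
    · subst hi; simp [Finset.mem_Icc, hj]
    · rw [Function.update_of_ne hi]; exact hc i
  have hGamma : Function.update c m j ∈ GammaF P M
      ↔ (Rok c m ∧ ∀ i, i ≠ m → ¬(j = c i ∧ 1 ≤ j ∧ j ≤ (M : ℤ))) := by
    rw [GammaF, Finset.mem_filter]
    constructor
    · rintro ⟨-, hp⟩
      constructor
      · intro i i' hii' him hi'm hbad
        exact hp i i' hii' (by rwa [Function.update_of_ne him, Function.update_of_ne hi'm])
      · intro i him ⟨hji, hj1, _⟩
        exact hp m i (fun h => him h.symm)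
          ⟨by rw [Function.update_self, Function.update_of_ne him, hji],
           by rw [Function.update_self]; omega⟩
    · rintro ⟨hR, hcl⟩
      refine ⟨hmem, fun i i' hii' hbad => ?_⟩
      by_cases him : i = m
      · have hi'm : i' ≠ m := fun h => hii' (him.trans h.symm)
        rw [him, Function.update_self, Function.update_of_ne hi'm] at hbad
        obtain ⟨h1, h2⟩ := hbad
        exact hcl i' hi'm ⟨h1, by omega, hj.2⟩
      · by_cases hi'm : i' = m
        · rw [hi'm, Function.update_of_ne him, Function.update_self] at hbad
          obtain ⟨h1, h2⟩ := hbad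
          refine hcl i him ⟨h1.symm, by omega, hj.2⟩
        · rw [Function.update_of_ne him, Function.update_of_ne hi'm] at hbad
          exact hR i i' hii' him hi'm hbad
  by_cases hR : Rok c m
  · by_cases hcl : ∀ i, i ≠ m → ¬(j = c i ∧ 1 ≤ j ∧ j ≤ (M : ℤ))
    · have hprod : ∏ i ∈ ({m}ᶜ : Finset (Fin P)), η i (Function.update c m j i)
          = ∏ i ∈ ({m}ᶜ : Finset (Fin P)), η i (c i) :=
        Finset.prod_congr rfl (fun i hi => by
          rw [Finset.mem_compl, Finset.mem_singleton] at hi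
          rw [Function.update_of_ne hi])
      rw [if_pos (hGamma.mpr ⟨hR, hcl⟩), if_pos hR, if_pos hcl,
        Fintype.prod_eq_mul_prod_compl m, Function.update_self, hprod]
      ring
    · rw [if_neg (fun h => hcl (hGamma.mp h).2), if_pos hR, if_neg hcl]
      ring
  · rw [if_neg (fun h => hR (hGamma.mp h).1), if_neg hR]
    ring
end helpers

section telescope

variable {P : ℕ} {M : ℕ} {η : Fin P → ℤ → ℝ}

lemma sum_pit_update (hc : ∀ i, c i ∈ Finset.Icc (-1 : ℤ) (M : ℤ)) (m : Fin P) :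
    ∑ j ∈ Finset.Icc (-1 : ℤ) (M : ℤ), pit P M η (Function.update c m j)
      = Bc M η c m * Knorm M η c m := by
  rw [Knorm, Finset.mul_sum]
  exact Finset.sum_congr rfl fun j hj => pit_update hc m hj

lemma sum_pit_wcond (hη : ∀ i : Fin P, ∀ j ∈ Finset.Icc (-1 : ℤ) (M : ℤ), 0 < η i j)
    (hc : ∀ i, c i ∈ Finset.Icc (-1 : ℤ) (M : ℤ)) (m : Fin P)
    {a : ℤ} (ha : a ∈ Finset.Icc (-1 : ℤ) (M : ℤ)) (T : ℝ) :
    ∑ j ∈ Finset.Icc (-1 : ℤ) (M : ℤ),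
        pit P M η (Function.update c m j) * (wcond M η c m a / Knorm M η c m * T)
      = pit P M η (Function.update c m a) * T := by
  rw [← Finset.sum_mul, sum_pit_update hc m, pit_update hc m ha]
  have hK := (Knorm_pos hη c m).ne'
  field_simp

noncomputable def Afun (P M : ℕ) (η : Fin P → ℤ → ℝ) (γ' : Fin P → ℤ) (m : ℕ) : ℝ :=
  ∑ γ ∈ Fintype.piFinset
      (fun i : Fin P => if (i : ℕ) < m then ({0} : Finset ℤ) else Finset.Icc (-1) (M : ℤ)),
    pit P M η (fun i => if (i : ℕ) < m then γ' i else γ i) *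
      ∏ n ∈ Finset.univ.filter (fun n : Fin P => m ≤ (n : ℕ)),
        (wcond M η (mix γ' γ n) n (γ' n) / Knorm M η (mix γ' γ n) n)

lemma Astep (hη : ∀ i : Fin P, ∀ j ∈ Finset.Icc (-1 : ℤ) (M : ℤ), 0 < η i j)
    {γ' : Fin P → ℤ} (hγ' : ∀ i, γ' i ∈ Finset.Icc (-1 : ℤ) (M : ℤ))
    {m : ℕ} (hm : m < P) :
    Afun P M η γ' m = Afun P M η γ' (m + 1) := by
  classical
  have h0Icc : (0 : ℤ) ∈ Finset.Icc (-1 : ℤ) (M : ℤ) := by simp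
  set m' : Fin P := ⟨m, hm⟩ with hm'def
  have hm'val : (m' : ℕ) = m := rfl
  rw [Afun, sum_pi_split _ m']
  have hupd : Function.update
        (fun i : Fin P => if (i : ℕ) < m then ({0} : Finset ℤ) else Finset.Icc (-1) (M : ℤ))
        m' {0}
      = fun i : Fin P => if (i : ℕ) < m + 1 then ({0} : Finset ℤ) else Finset.Icc (-1) (M : ℤ) := by
    funext i
    by_cases hi : i = m'
    · rw [hi, Function.update_self, hm'val]
      simp
    · rw [Function.update_of_ne hi]
      have hne : (i : ℕ) ≠ m := fun h => hi (Fin.ext h)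
      by_cases h2 : (i : ℕ) < m
      · rw [if_pos h2, if_pos (by omega)]
      · rw [if_neg h2, if_neg (by omega)]
  have htm : (if (m' : ℕ) < m then ({0} : Finset ℤ) else Finset.Icc (-1) (M : ℤ))
      = Finset.Icc (-1) (M : ℤ) := by rw [hm'val, if_neg (lt_irrefl m)]
  rw [hupd, Afun]
  refine Finset.sum_congr rfl fun γ hγ => ?_
  simp only [Fintype.mem_piFinset] at hγ
  -- the conditioning vector
  set c : Fin P → ℤ := fun i => if (i : ℕ) < m then γ' i else γ i with hc_def
  have hc_app : ∀ i : Fin P, c i = if (i : ℕ) < m then γ' i else γ i := fun i => rfl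
  have hltm' : ∀ i : Fin P, i < m' ↔ (i : ℕ) < m := by
    intro i; rw [Fin.lt_def, hm'val]
  have hcIcc : ∀ i, c i ∈ Finset.Icc (-1 : ℤ) (M : ℤ) := by
    intro i
    rw [hc_app i]
    by_cases h2 : (i : ℕ) < m
    · rw [if_pos h2]; exact hγ' i
    · rw [if_neg h2]
      by_cases h3 : (i : ℕ) < m + 1
      · have := hγ i
        rw [if_pos h3, Finset.mem_singleton] at this
        rw [this]; exact h0Icc
      · have := hγ i
        rw [if_neg h3] at this
        exact this
  have hmix : ∀ j : ℤ, (fun i : Fin P => if (i : ℕ) < m then γ' i else Function.update γ m' j i)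
      = Function.update c m' j := by
    intro j
    funext i
    show (if (i : ℕ) < m then γ' i else Function.update γ m' j i) = _
    by_cases hi : i = m'
    · rw [hi, Function.update_self, hm'val, if_neg (lt_irrefl m), Function.update_self]
    · rw [Function.update_of_ne hi, Function.update_of_ne hi, hc_app i]
  have hins : Finset.univ.filter (fun n : Fin P => m ≤ (n : ℕ))
      = insert m' (Finset.univ.filter (fun n : Fin P => m + 1 ≤ (n : ℕ))) := by
    ext n
    simp only [Finset.mem_filter, Finset.mem_univ, true_and, Finset.mem_insert, Fin.ext_iff,
      hm'val]
    omega
  have hnotmem : m' ∉ Finset.univ.filter (fun n : Fin P => m + 1 ≤ (n : ℕ)) := by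
    simp [hm'val]
  -- the tail product does not depend on the update
  have htail : ∀ j : ℤ, ∀ n ∈ Finset.univ.filter (fun n : Fin P => m + 1 ≤ (n : ℕ)),
      wcond M η (mix γ' (Function.update γ m' j) n) n ((γ' n))
          / Knorm M η (mix γ' (Function.update γ m' j) n) n
        = wcond M η (mix γ' γ n) n (γ' n) / Knorm M η (mix γ' γ n) n := by
    intro j n hn
    simp only [Finset.mem_filter] at hn
    have hmn : m < (n : ℕ) := by omega
    have : mix γ' (Function.update γ m' j) n = mix γ' γ n := by
      funext i
      show (if i < n then γ' i else Function.update γ m' j i) = (if i < n then γ' i else γ i)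
      by_cases hi : i < n
      · rw [if_pos hi, if_pos hi]
      · have : i ≠ m' := by
          intro h
          apply hi
          rw [h, Fin.lt_def, hm'val]
          exact hmn
        rw [if_neg hi, if_neg hi, Function.update_of_ne this]
    rw [this]
  have hmixm' : ∀ j : ℤ, ∀ x : ℤ,
      wcond M η (mix γ' (Function.update γ m' j) m') m' x = wcond M η c m' x := by
    intro j x
    refine wcond_congr (fun i hi => ?_) x
    show (if i < m' then γ' i else Function.update γ m' j i) = c i
    rw [hc_app i]
    by_cases h2 : (i : ℕ) < m
    · rw [if_pos ((hltm' i).mpr h2), if_pos h2]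
    · rw [if_neg (fun h => h2 ((hltm' i).mp h)), if_neg h2, Function.update_of_ne hi]
  have hKm' : ∀ j : ℤ,
      Knorm M η (mix γ' (Function.update γ m' j) m') m' = Knorm M η c m' := by
    intro j
    refine Knorm_congr (fun i hi => ?_)
    show (if i < m' then γ' i else Function.update γ m' j i) = c i
    rw [hc_app i]
    by_cases h2 : (i : ℕ) < m
    · rw [if_pos ((hltm' i).mpr h2), if_pos h2]
    · rw [if_neg (fun h => h2 ((hltm' i).mp h)), if_neg h2, Function.update_of_ne hi]
  set T : ℝ := ∏ n ∈ Finset.univ.filter (fun n : Fin P => m + 1 ≤ (n : ℕ)),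
      (wcond M η (mix γ' γ n) n (γ' n) / Knorm M η (mix γ' γ n) n) with hT
  have hstep : ∀ j ∈ Finset.Icc (-1 : ℤ) (M : ℤ),
      pit P M η (fun i => if (i : ℕ) < m then γ' i else Function.update γ m' j i) *
        ∏ n ∈ Finset.univ.filter (fun n : Fin P => m ≤ (n : ℕ)),
          (wcond M η (mix γ' (Function.update γ m' j) n) n (γ' n)
            / Knorm M η (mix γ' (Function.update γ m' j) n) n)
      = pit P M η (Function.update c m' j) * (wcond M η c m' (γ' m') / Knorm M η c m' * T) := by
    intro j _
    rw [hmix j, hins, Finset.prod_insert hnotmem, hmixm' j, hKm' j,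
      Finset.prod_congr rfl (htail j)]
  rw [htm, Finset.sum_congr rfl hstep, sum_pit_wcond hη hcIcc m' (hγ' m') T]
  congr 1
  · congr 1
    funext i
    by_cases hi : i = m'
    · rw [hi, Function.update_self, hm'val, if_pos (by omega)]
    · rw [Function.update_of_ne hi, hc_app i]
      by_cases h2 : (i : ℕ) < m
      · rw [if_pos h2, if_pos (by omega)]
      · rw [if_neg h2, if_neg (by omega)]

end telescope

section endpoints

variable {P : ℕ} {M : ℕ} {η : Fin P → ℤ → ℝ}

lemma Afun_zero (γ' : Fin P → ℤ) :
    Afun P M η γ' 0 = ∑ γ ∈ Fintype.piFinset (fun _ : Fin P => Finset.Icc (-1 : ℤ) (M : ℤ)),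
      pit P M η γ * gibbs M η γ' γ := by
  rw [Afun]
  have h1 : (fun i : Fin P => if (i : ℕ) < 0 then ({0} : Finset ℤ) else Finset.Icc (-1) (M : ℤ))
      = fun _ : Fin P => Finset.Icc (-1 : ℤ) (M : ℤ) := by
    funext i; simp
  rw [h1]
  refine Finset.sum_congr rfl fun γ hγ => ?_
  rw [show (fun i : Fin P => if (i : ℕ) < 0 then γ' i else γ i) = γ from
      funext fun i => by simp,
    gibbs, Finset.filter_true_of_mem (fun n _ => Nat.zero_le _)]

lemma Afun_top (γ' : Fin P → ℤ) : Afun P M η γ' P = pit P M η γ' := by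
  rw [Afun]
  have h1 : ∀ γ : Fin P → ℤ, (fun i : Fin P => if (i : ℕ) < P then γ' i else γ i) = γ' := by
    intro γ; funext i; rw [if_pos i.isLt]
  have h2 : Finset.univ.filter (fun n : Fin P => P ≤ (n : ℕ)) = ∅ := by
    ext n
    simp only [Finset.mem_filter, Finset.mem_univ, true_and, Finset.notMem_empty, iff_false]
    exact Nat.not_le.mpr n.isLt
  rw [Finset.sum_congr rfl (fun γ _ => by rw [h1 γ, h2, Finset.prod_empty, mul_one])]
  rw [Finset.sum_const]
  have h3 : (Fintype.piFinset
      (fun i : Fin P => if (i : ℕ) < P then ({0} : Finset ℤ) else Finset.Icc (-1) (M : ℤ))).card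
      = 1 := by
    rw [Fintype.card_piFinset]
    refine Finset.prod_eq_one fun i _ => ?_
    rw [if_pos i.isLt, Finset.card_singleton]
  rw [h3, one_smul]

lemma Afun_chain (hη : ∀ i : Fin P, ∀ j ∈ Finset.Icc (-1 : ℤ) (M : ℤ), 0 < η i j)
    {γ' : Fin P → ℤ} (hγ' : ∀ i, γ' i ∈ Finset.Icc (-1 : ℤ) (M : ℤ)) :
    Afun P M η γ' 0 = Afun P M η γ' P := by
  suffices h : ∀ k, k ≤ P → Afun P M η γ' (P - k) = Afun P M η γ' P by
    simpa using h P le_rfl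
  intro k hk
  induction k with
  | zero => simp
  | succ k ih =>
    have h1 : P - (k + 1) < P := by omega
    rw [Astep hη hγ' h1]
    have h2 : P - (k + 1) + 1 = P - k := by omega
    rw [h2]
    exact ih (by omega)

lemma mem_GammaF_iff {γ : Fin P → ℤ} :
    γ ∈ GammaF P M ↔ (∀ i, γ i ∈ Finset.Icc (-1 : ℤ) (M : ℤ)) ∧ PosOneOne γ := by
  rw [GammaF, Finset.mem_filter, Fintype.mem_piFinset]; rfl

lemma stat_unnorm (hη : ∀ i : Fin P, ∀ j ∈ Finset.Icc (-1 : ℤ) (M : ℤ), 0 < η i j)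
    {γ' : Fin P → ℤ} (hγ' : γ' ∈ GammaF P M) :
    ∑ γ ∈ GammaF P M, pit P M η γ * gibbs M η γ' γ = pit P M η γ' := by
  have hIcc : ∀ i, γ' i ∈ Finset.Icc (-1 : ℤ) (M : ℤ) := (mem_GammaF_iff.mp hγ').1
  rw [show (∑ γ ∈ GammaF P M, pit P M η γ * gibbs M η γ' γ)
      = ∑ γ ∈ Fintype.piFinset (fun _ : Fin P => Finset.Icc (-1 : ℤ) (M : ℤ)),
          pit P M η γ * gibbs M η γ' γ from
    Finset.sum_subset (Finset.filter_subset _ _)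
      (fun x _ hx => by rw [pit, if_neg hx, zero_mul])]
  rw [← Afun_zero, Afun_chain hη hIcc, Afun_top]

end endpoints

section coltele

variable {P : ℕ} {M : ℕ} {η : Fin P → ℤ → ℝ}

noncomputable def Bfun (P M : ℕ) (η : Fin P → ℤ → ℝ) (γ : Fin P → ℤ) (m : ℕ) : ℝ :=
  ∑ δ ∈ Fintype.piFinset
      (fun i : Fin P => if (i : ℕ) < m then Finset.Icc (-1) (M : ℤ) else ({0} : Finset ℤ)),
    ∏ n ∈ Finset.univ.filter (fun n : Fin P => (n : ℕ) < m),
      (wcond M η (mix δ γ n) n (δ n) / Knorm M η (mix δ γ n) n)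

lemma Bstep (hη : ∀ i : Fin P, ∀ j ∈ Finset.Icc (-1 : ℤ) (M : ℤ), 0 < η i j)
    (γ : Fin P → ℤ) {m : ℕ} (hm : m < P) :
    Bfun P M η γ (m + 1) = Bfun P M η γ m := by
  classical
  set m' : Fin P := ⟨m, hm⟩ with hm'def
  have hm'val : (m' : ℕ) = m := rfl
  rw [Bfun, sum_pi_split _ m']
  have hupd : Function.update
        (fun i : Fin P => if (i : ℕ) < m + 1 then Finset.Icc (-1) (M : ℤ) else ({0} : Finset ℤ))
        m' {0}
      = fun i : Fin P => if (i : ℕ) < m then Finset.Icc (-1) (M : ℤ) else ({0} : Finset ℤ) := by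
    funext i
    by_cases hi : i = m'
    · rw [hi, Function.update_self, hm'val, if_neg (lt_irrefl m)]
    · rw [Function.update_of_ne hi]
      have hne : (i : ℕ) ≠ m := fun h => hi (Fin.ext h)
      by_cases h2 : (i : ℕ) < m
      · rw [if_pos (by omega), if_pos h2]
      · rw [if_neg (by omega), if_neg h2]
  have htm : (if (m' : ℕ) < m + 1 then Finset.Icc (-1) (M : ℤ) else ({0} : Finset ℤ))
      = Finset.Icc (-1) (M : ℤ) := by rw [hm'val, if_pos (by omega)]
  rw [hupd, htm, Bfun]
  refine Finset.sum_congr rfl fun δ hδ => ?_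
  have hins : Finset.univ.filter (fun n : Fin P => (n : ℕ) < m + 1)
      = insert m' (Finset.univ.filter (fun n : Fin P => (n : ℕ) < m)) := by
    ext n
    simp only [Finset.mem_filter, Finset.mem_univ, true_and, Finset.mem_insert, Fin.ext_iff,
      hm'val]
    omega
  have hnotmem : m' ∉ Finset.univ.filter (fun n : Fin P => (n : ℕ) < m) := by
    simp [hm'val]
  have htail : ∀ j : ℤ, ∀ n ∈ Finset.univ.filter (fun n : Fin P => (n : ℕ) < m),
      wcond M η (mix (Function.update δ m' j) γ n) n (Function.update δ m' j n)
          / Knorm M η (mix (Function.update δ m' j) γ n) n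
        = wcond M η (mix δ γ n) n (δ n) / Knorm M η (mix δ γ n) n := by
    intro j n hn
    simp only [Finset.mem_filter] at hn
    have hnm : (n : ℕ) < m := hn.2
    have hne : n ≠ m' := fun h => by rw [h, hm'val] at hnm; omega
    have hmixeq : mix (Function.update δ m' j) γ n = mix δ γ n := by
      funext i
      show (if i < n then Function.update δ m' j i else γ i) = (if i < n then δ i else γ i)
      by_cases hi : i < n
      · have : i ≠ m' := by
          intro h
          rw [Fin.lt_def, h, hm'val] at hi
          omega
        rw [if_pos hi, if_pos hi, Function.update_of_ne this]
      · rw [if_neg hi, if_neg hi]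
    rw [hmixeq, Function.update_of_ne hne]
  have hmixm : ∀ j : ℤ, mix (Function.update δ m' j) γ m' = mix δ γ m' := by
    intro j
    funext i
    show (if i < m' then Function.update δ m' j i else γ i) = (if i < m' then δ i else γ i)
    by_cases hi : i < m'
    · rw [if_pos hi, if_pos hi, Function.update_of_ne (ne_of_lt hi)]
    · rw [if_neg hi, if_neg hi]
  have hstep : ∀ j ∈ Finset.Icc (-1 : ℤ) (M : ℤ),
      ∏ n ∈ Finset.univ.filter (fun n : Fin P => (n : ℕ) < m + 1),
        (wcond M η (mix (Function.update δ m' j) γ n) n (Function.update δ m' j n)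
          / Knorm M η (mix (Function.update δ m' j) γ n) n)
      = wcond M η (mix δ γ m') m' j / Knorm M η (mix δ γ m') m' *
          ∏ n ∈ Finset.univ.filter (fun n : Fin P => (n : ℕ) < m),
            (wcond M η (mix δ γ n) n (δ n) / Knorm M η (mix δ γ n) n) := by
    intro j _
    rw [hins, Finset.prod_insert hnotmem, hmixm j, Function.update_self,
      Finset.prod_congr rfl (htail j)]
  rw [Finset.sum_congr rfl hstep, ← Finset.sum_mul, ← Finset.sum_div]
  rw [show (∑ j ∈ Finset.Icc (-1 : ℤ) (M : ℤ), wcond M η (mix δ γ m') m' j)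
      = Knorm M η (mix δ γ m') m' from rfl]
  rw [div_self (Knorm_pos hη _ _).ne', one_mul]

lemma Bfun_zero (γ : Fin P → ℤ) : Bfun P M η γ 0 = 1 := by
  rw [Bfun]
  have h2 : Finset.univ.filter (fun n : Fin P => (n : ℕ) < 0) = ∅ := by
    ext n; simp
  rw [Finset.sum_congr rfl (fun δ _ => by rw [h2, Finset.prod_empty]), Finset.sum_const]
  have h3 : (Fintype.piFinset
      (fun i : Fin P => if (i : ℕ) < 0 then Finset.Icc (-1) (M : ℤ) else ({0} : Finset ℤ))).card
      = 1 := by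
    rw [Fintype.card_piFinset]
    refine Finset.prod_eq_one fun i _ => ?_
    simp
  rw [h3, one_smul]

lemma Bfun_top (γ : Fin P → ℤ) :
    Bfun P M η γ P = ∑ δ ∈ Fintype.piFinset (fun _ : Fin P => Finset.Icc (-1 : ℤ) (M : ℤ)),
      gibbs M η δ γ := by
  rw [Bfun]
  have h1 : (fun i : Fin P => if (i : ℕ) < P then Finset.Icc (-1) (M : ℤ) else ({0} : Finset ℤ))
      = fun _ : Fin P => Finset.Icc (-1 : ℤ) (M : ℤ) := by
    funext i; rw [if_pos i.isLt]
  rw [h1]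
  refine Finset.sum_congr rfl fun δ _ => ?_
  rw [gibbs, Finset.filter_true_of_mem (fun n _ => n.isLt)]

lemma gibbs_vanish {δ γ : Fin P → ℤ} (hδbox : ∀ i, δ i ∈ Finset.Icc (-1 : ℤ) (M : ℤ))
    (hδ : ¬ PosOneOne δ) : gibbs M η δ γ = 0 := by
  rw [PosOneOne] at hδ
  push_neg at hδ
  obtain ⟨i, i', hne, heq, hpos⟩ := hδ
  -- produce a pair b < a with δ a = δ b and 0 < δ a
  obtain ⟨a, b, hba, heq', hpos'⟩ : ∃ a b : Fin P, b < a ∧ δ a = δ b ∧ 0 < δ a := by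
    rcases lt_or_gt_of_ne hne with h | h
    · exact ⟨i', i, h, heq.symm, heq ▸ hpos⟩
    · exact ⟨i, i', h, heq, hpos⟩
  rw [gibbs]
  apply Finset.prod_eq_zero (Finset.mem_univ a)
  have hwz : wcond M η (mix δ γ a) a (δ a) = 0 := by
    rw [wcond, prod_indic, if_neg, mul_zero]
    push_neg
    refine ⟨b, ne_of_lt hba, ?_, by omega, ?_⟩
    · show δ a = (if b < a then δ b else γ b)
      rw [if_pos hba, heq']
    · have := hδbox a
      rw [Finset.mem_Icc] at this
      exact this.2
  rw [hwz, zero_div]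

lemma gibbs_colsum (hη : ∀ i : Fin P, ∀ j ∈ Finset.Icc (-1 : ℤ) (M : ℤ), 0 < η i j)
    (γ : Fin P → ℤ) : ∑ δ ∈ GammaF P M, gibbs M η δ γ = 1 := by
  have hchain : ∀ k, k ≤ P → Bfun P M η γ k = 1 := by
    intro k hk
    induction k with
    | zero => exact Bfun_zero γ
    | succ k ih => rw [Bstep hη γ (by omega)]; exact ih (by omega)
  have h1 : ∑ δ ∈ GammaF P M, gibbs M η δ γ
      = ∑ δ ∈ Fintype.piFinset (fun _ : Fin P => Finset.Icc (-1 : ℤ) (M : ℤ)), gibbs M η δ γ := by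
    refine Finset.sum_subset (Finset.filter_subset _ _) (fun δ hδ hnδ => ?_)
    rw [Fintype.mem_piFinset] at hδ
    refine gibbs_vanish hδ (fun hpos => hnδ ?_)
    exact mem_GammaF_iff.mpr ⟨hδ, hpos⟩
  rw [h1, ← Bfun_top, hchain P le_rfl]

lemma gibbs_nonneg (hη : ∀ i : Fin P, ∀ j ∈ Finset.Icc (-1 : ℤ) (M : ℤ), 0 < η i j)
    {δ : Fin P → ℤ} (hδ : ∀ i, δ i ∈ Finset.Icc (-1 : ℤ) (M : ℤ)) (γ : Fin P → ℤ) :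
    0 ≤ gibbs M η δ γ := by
  rw [gibbs]
  refine Finset.prod_nonneg fun n _ => div_nonneg ?_ (Knorm_pos hη _ _).le
  exact wcond_nonneg hη _ _ (hδ n)

lemma gibbs_to_zero (hη : ∀ i : Fin P, ∀ j ∈ Finset.Icc (-1 : ℤ) (M : ℤ), 0 < η i j)
    (γ : Fin P → ℤ) : 0 < gibbs M η (fun _ => (0 : ℤ)) γ := by
  have h0Icc : (0 : ℤ) ∈ Finset.Icc (-1 : ℤ) (M : ℤ) := by simp
  rw [gibbs]
  refine Finset.prod_pos fun n _ => div_pos ?_ (Knorm_pos hη _ _)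
  rw [wcond]
  have hind : ind1M M 0 = 0 := by rw [ind1M, if_neg (by omega)]
  rw [hind]
  have : ∏ i ∈ ({n}ᶜ : Finset (Fin P)), (1 - 0 * kdelta 0 (mix (fun _ => (0:ℤ)) γ n i))
      = 1 := Finset.prod_eq_one fun i _ => by ring
  rw [this, mul_one]
  exact hη n 0 h0Icc

lemma gibbs_from_zero (hη : ∀ i : Fin P, ∀ j ∈ Finset.Icc (-1 : ℤ) (M : ℤ), 0 < η i j)
    {δ : Fin P → ℤ} (hδ : δ ∈ GammaF P M) : 0 < gibbs M η δ (fun _ => (0 : ℤ)) := by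
  obtain ⟨hbox, hpos⟩ := mem_GammaF_iff.mp hδ
  rw [gibbs]
  refine Finset.prod_pos fun n _ => div_pos ?_ (Knorm_pos hη _ _)
  rw [wcond, prod_indic, if_pos, mul_one]
  · exact hη n (δ n) (hbox n)
  · rintro i hin ⟨hmix, h1, _⟩
    by_cases hlt : i < n
    · rw [show mix δ (fun _ => (0:ℤ)) n i = δ i from if_pos hlt] at hmix
      exact hpos n i (fun h => hin h.symm) ⟨hmix, by omega⟩
    · rw [show mix δ (fun _ => (0:ℤ)) n i = 0 from if_neg hlt] at hmix
      omega

end coltele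

section unique

lemma unique_fixed {α : Type*} [DecidableEq α] (S : Finset α) (K : α → α → ℝ) (z : α)
    (hz : z ∈ S)
    (hnn : ∀ γ' ∈ S, ∀ γ ∈ S, 0 ≤ K γ' γ)
    (hposz : ∀ γ ∈ S, 0 < K z γ) (hposz' : ∀ γ' ∈ S, 0 < K γ' z)
    (hcol : ∀ γ ∈ S, ∑ γ' ∈ S, K γ' γ = 1)
    (d : α → ℝ) (hsum : ∑ γ ∈ S, d γ = 0)
    (hfix : ∀ γ' ∈ S, ∑ γ ∈ S, K γ' γ * d γ = d γ') :
    ∀ γ ∈ S, d γ = 0 := by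
  classical
  set K2 : α → α → ℝ := fun γ' γ => ∑ β ∈ S, K γ' β * K β γ with hK2def
  have hK2nn : ∀ γ' ∈ S, ∀ γ ∈ S, 0 ≤ K2 γ' γ := fun γ' h' γ h =>
    Finset.sum_nonneg fun β hβ => mul_nonneg (hnn γ' h' β hβ) (hnn β hβ γ h)
  have hK2pos : ∀ γ' ∈ S, ∀ γ ∈ S, 0 < K2 γ' γ := by
    intro γ' h' γ h
    refine Finset.sum_pos' (fun β hβ => mul_nonneg (hnn γ' h' β hβ) (hnn β hβ γ h)) ⟨z, hz, ?_⟩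
    exact mul_pos (hposz' γ' h') (hposz γ h)
  have hK2col : ∀ γ ∈ S, ∑ γ' ∈ S, K2 γ' γ = 1 := by
    intro γ h
    rw [hK2def]
    rw [Finset.sum_comm]
    rw [Finset.sum_congr rfl fun β hβ => by
      rw [← Finset.sum_mul, hcol β hβ, one_mul]]
    exact hcol γ h
  have hfix2 : ∀ γ' ∈ S, ∑ γ ∈ S, K2 γ' γ * d γ = d γ' := by
    intro γ' h'
    have : ∑ γ ∈ S, K2 γ' γ * d γ = ∑ γ ∈ S, ∑ β ∈ S, K γ' β * K β γ * d γ := by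
      exact Finset.sum_congr rfl fun γ _ => by rw [hK2def, Finset.sum_mul]
    rw [this, Finset.sum_comm]
    rw [Finset.sum_congr rfl fun β hβ => by
      rw [Finset.sum_congr rfl fun γ (_ : γ ∈ S) => (mul_assoc (K γ' β) (K β γ) (d γ)),
        ← Finset.mul_sum, hfix β hβ]]
    exact hfix γ' h'
  have hEnn : ∀ γ' ∈ S, |d γ'| ≤ ∑ γ ∈ S, K2 γ' γ * |d γ| := by
    intro γ' h'
    calc |d γ'| = |∑ γ ∈ S, K2 γ' γ * d γ| := by rw [hfix2 γ' h']
      _ ≤ ∑ γ ∈ S, |K2 γ' γ * d γ| := Finset.abs_sum_le_sum_abs _ _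
      _ = ∑ γ ∈ S, K2 γ' γ * |d γ| := Finset.sum_congr rfl fun γ h => by
          rw [abs_mul, abs_of_nonneg (hK2nn γ' h' γ h)]
  have hTV : ∑ γ' ∈ S, (∑ γ ∈ S, K2 γ' γ * |d γ| - |d γ'|) = 0 := by
    rw [Finset.sum_sub_distrib, Finset.sum_comm]
    rw [Finset.sum_congr rfl fun γ h => by
      rw [← Finset.sum_mul, hK2col γ h, one_mul]]
    ring
  have hEq : ∀ γ' ∈ S, ∑ γ ∈ S, K2 γ' γ * |d γ| = |d γ'| := by
    intro γ' h'
    have := (Finset.sum_eq_zero_iff_of_nonneg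
      (fun γ' h' => sub_nonneg.mpr (hEnn γ' h'))).mp hTV γ' h'
    linarith
  -- main contradiction argument
  intro γ0 hγ0
  by_contra hd0
  obtain ⟨p, hp, hdp, q, hq, hdq⟩ :
      ∃ p ∈ S, 0 < d p ∧ ∃ q ∈ S, d q < 0 := by
    rcases lt_or_gt_of_ne hd0 with h | h
    · have hex : ∃ p ∈ S, 0 < d p := by
        by_contra hc
        push_neg at hc
        have h2 := (Finset.sum_eq_zero_iff_of_nonpos (fun γ hγ => hc γ hγ)).mp hsum γ0 hγ0
        exact hd0 h2
      obtain ⟨p, hp, hdp⟩ := hex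
      exact ⟨p, hp, hdp, γ0, hγ0, h⟩
    · have hex : ∃ q ∈ S, d q < 0 := by
        by_contra hc
        push_neg at hc
        have h1 : ∑ γ ∈ S, d γ = 0 := hsum
        have h2 := (Finset.sum_eq_zero_iff_of_nonneg (fun γ hγ => hc γ hγ)).mp h1 γ0 hγ0
        exact hd0 h2
      obtain ⟨q, hq, hdq⟩ := hex
      exact ⟨γ0, hγ0, h, q, hq, hdq⟩
  have h1 := hEq p hp
  have h2 := hfix2 p hp
  have habs : ∑ γ ∈ S, |K2 p γ * d γ| = |∑ γ ∈ S, K2 p γ * d γ| := by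
    rw [h2, Finset.sum_congr rfl fun γ h => by rw [abs_mul, abs_of_nonneg (hK2nn p hp γ h)], h1]
  have hxq : K2 p q * d q < 0 := mul_neg_of_pos_of_neg (hK2pos p hp q hq) hdq
  have hxp : 0 < K2 p p * d p := mul_pos (hK2pos p hp p hp) hdp
  rcases le_or_gt 0 (∑ γ ∈ S, K2 p γ * d γ) with hS | hS
  · have h3 : ∑ γ ∈ S, (|K2 p γ * d γ| - K2 p γ * d γ) = 0 := by
      rw [Finset.sum_sub_distrib, habs, abs_of_nonneg hS, sub_self]
    have h4 := (Finset.sum_eq_zero_iff_of_nonneg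
      (fun γ _ => sub_nonneg.mpr (le_abs_self _))).mp h3 q hq
    have h5 : |K2 p q * d q| = K2 p q * d q := by linarith
    have := abs_nonneg (K2 p q * d q)
    linarith
  · have h3 : ∑ γ ∈ S, (|K2 p γ * d γ| + K2 p γ * d γ) = 0 := by
      rw [Finset.sum_add_distrib, habs, abs_of_neg hS]
      ring
    have h4 := (Finset.sum_eq_zero_iff_of_nonneg
      (fun γ _ => by have := neg_abs_le (K2 p γ * d γ); linarith)).mp h3 p hp
    have := abs_nonneg (K2 p p * d p)
    linarith

end unique

/-- the target distribution `π(γ) ∝ 1_Γ(γ) ∏_i η_i(γ_i)` is the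
unique stationary distribution of the Gibbs sampler on `Γ`: it satisfies
`∑_{γ∈Γ} π(γ'|γ) π(γ) = π(γ')` for every `γ' ∈ Γ`, and any probability
distribution on `Γ` satisfying this balance equation coincides with it. -/
theorem stmt11 (P M : ℕ) (hP : 0 < P) (hM : 0 < M) (η : Fin P → ℤ → ℝ)
    (hη : ∀ i : Fin P, ∀ j ∈ Finset.Icc (-1 : ℤ) (M : ℤ), 0 < η i j) :
    (∀ γ' ∈ GammaF P M,
      ∑ γ ∈ GammaF P M, gibbs M η γ' γ * targetDist P M η γ = targetDist P M η γ') ∧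
    (∀ μ : (Fin P → ℤ) → ℝ,
      (∀ γ ∈ GammaF P M, 0 ≤ μ γ) →
      (∑ γ ∈ GammaF P M, μ γ) = 1 →
      (∀ γ' ∈ GammaF P M, ∑ γ ∈ GammaF P M, gibbs M η γ' γ * μ γ = μ γ') →
      ∀ γ ∈ GammaF P M, μ γ = targetDist P M η γ) := by
  classical
  have h0Icc : (0 : ℤ) ∈ Finset.Icc (-1 : ℤ) (M : ℤ) := by simp
  have hzmem : (fun _ : Fin P => (0 : ℤ)) ∈ GammaF P M := by
    rw [mem_GammaF_iff]
    exact ⟨fun i => h0Icc, fun i i' hne h => absurd h.2 (lt_irrefl 0)⟩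
  have hZ : 0 < ∑ ζ ∈ GammaF P M, ∏ i, η i (ζ i) := by
    refine Finset.sum_pos (fun ζ hζ => Finset.prod_pos fun i _ =>
      hη i (ζ i) ((mem_GammaF_iff.mp hζ).1 i)) ⟨_, hzmem⟩
  have htd : ∀ γ, targetDist P M η γ
      = pit P M η γ / (∑ ζ ∈ GammaF P M, ∏ i, η i (ζ i)) := fun γ => rfl
  have hpart1 : ∀ γ' ∈ GammaF P M,
      ∑ γ ∈ GammaF P M, gibbs M η γ' γ * targetDist P M η γ = targetDist P M η γ' := by
    intro γ' hγ'
    rw [htd γ', ← stat_unnorm hη hγ', Finset.sum_div]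
    refine Finset.sum_congr rfl fun γ _ => ?_
    rw [htd γ]; ring
  refine ⟨hpart1, ?_⟩
  intro μ hμnn hμ1 hμfix γ hγ
  have htd1 : ∑ γ ∈ GammaF P M, targetDist P M η γ = 1 := by
    rw [Finset.sum_congr rfl (fun γ hγ => htd γ), ← Finset.sum_div,
      Finset.sum_congr rfl (fun γ hγ => by rw [pit, if_pos hγ])]
    exact div_self hZ.ne'
  set d : (Fin P → ℤ) → ℝ := fun γ => μ γ - targetDist P M η γ with hd
  have hdsum : ∑ γ ∈ GammaF P M, d γ = 0 := by
    rw [hd, Finset.sum_sub_distrib, hμ1, htd1]; ring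
  have hdfix : ∀ γ' ∈ GammaF P M, ∑ γ ∈ GammaF P M, gibbs M η γ' γ * d γ = d γ' := by
    intro γ' hγ'
    have h1 := hμfix γ' hγ'
    have h2 := hpart1 γ' hγ'
    rw [hd]
    simp only [mul_sub]
    rw [Finset.sum_sub_distrib, h1, h2]
  have hzero := unique_fixed (GammaF P M) (gibbs M η) (fun _ => (0 : ℤ)) hzmem
    (fun γ' h' γ h => gibbs_nonneg hη ((mem_GammaF_iff.mp h').1) γ)
    (fun γ h => gibbs_to_zero hη γ)
    (fun γ' h' => gibbs_from_zero hη h')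
    (fun γ h => gibbs_colsum hη γ)
    d hdsum hdfix γ hγ
  have : μ γ - targetDist P M η γ = 0 := hzero
  linarith
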